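/- arXiv:1507.06891 — 5 statements merged into one kernel-verified Lean document; each statement's English description precedes it below -/
import Mathlib

section
/- Let ε ∈ {0,1} and let p, δ, k be integers with k + ε ≥ 2 and 0 ≤ δ ≤ p − 2ε. Set α := ⌊(p − δ − ε)/(2(k − 1 + 2ε))⌋. Then δ ≥ α·(p − δ − ε − (k − 1 + 2ε)(α + 1)) holds if and only if ρ(p, l, (k + ε)l + δ) + ε·l·(l + 2) ≥ 0 for every integer l ≥ 0. -/
/-- The Brill–Noether number ρ(g, r, d) := g − (r + 1)(g − d + r). -/
def brillNoetherRho (g r d : ℤ) : ℤ := g - (r + 1) * (g - d + r)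

/-- Key quadratic maximization lemma: the integer `α = ⌊N/(2m)⌋` maximizes
`l ↦ l * (N - m * (l + 1))` over all integers `l`. -/
lemma key_quad (m N α l : ℤ) (hm : 1 ≤ m) (h1 : 2 * m * α ≤ N)
    (h2 : N < 2 * m * (α + 1)) :
    l * (N - m * (l + 1)) ≤ α * (N - m * (α + 1)) := by
  rcases lt_trichotomy l α with h | h | h
  · have hf : 0 ≤ N - m * (α + l + 1) := by nlinarith
    nlinarith [mul_nonneg (by linarith : (0:ℤ) ≤ α - l) hf]
  · simp [h]
  · have hf : N - m * (α + l + 1) ≤ 0 := by nlinarith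
    nlinarith [mul_nonneg (by linarith : (0:ℤ) ≤ l - α) (by linarith : (0:ℤ) ≤ -(N - m * (α + l + 1)))]

/-- Equivalence of conditions (eq:boundA) and (eq:boundB): for ε ∈ {0,1}, integers
p, δ, k with k + ε ≥ 2 and 0 ≤ δ ≤ p − 2ε, and α := ⌊(p − δ − ε)/(2(k − 1 + 2ε))⌋,
one has δ ≥ α·(p − δ − ε − (k − 1 + 2ε)(α + 1)) if and only if
ρ(p, l, (k + ε)l + δ) + ε·l·(l + 2) ≥ 0 for all integers l ≥ 0. -/
theorem boundA_iff_boundB (ε p δ k α : ℤ)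
    (hε : ε = 0 ∨ ε = 1) (hk : k + ε ≥ 2) (hδ0 : 0 ≤ δ) (hδ1 : δ ≤ p - 2 * ε)
    (hα : α = ⌊((p : ℚ) - δ - ε) / (2 * ((k : ℚ) - 1 + 2 * ε))⌋) :
    δ ≥ α * (p - δ - ε - (k - 1 + 2 * ε) * (α + 1)) ↔
      ∀ l : ℤ, 0 ≤ l → brillNoetherRho p l ((k + ε) * l + δ) + ε * l * (l + 2) ≥ 0 := by
  have hε0 : (0:ℤ) ≤ ε := by rcases hε with h | h <;> simp [h]
  set m : ℤ := k - 1 + 2 * ε with hm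
  set N : ℤ := p - δ - ε with hN
  have hm1 : 1 ≤ m := by omega
  have hN0 : 0 ≤ N := by omega
  have h2mQ : (0:ℚ) < 2 * ((k:ℚ) - 1 + 2 * ε) := by
    have : (1:ℚ) ≤ (m:ℚ) := by exact_mod_cast hm1
    push_cast [hm] at this ⊢
    linarith
  have hcast : ((p:ℚ) - δ - ε) = (N:ℚ) := by push_cast [hN]; ring
  have hcast2 : (2 * ((k:ℚ) - 1 + 2 * ε)) = ((2*m : ℤ):ℚ) := by push_cast [hm]; ring
  have hfl1 : (α:ℚ) ≤ ((p:ℚ) - δ - ε) / (2 * ((k:ℚ) - 1 + 2 * ε)) := hα ▸ Int.floor_le _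
  have hfl2 : ((p:ℚ) - δ - ε) / (2 * ((k:ℚ) - 1 + 2 * ε)) < (α:ℚ) + 1 := by
    rw [hα]; exact Int.lt_floor_add_one _
  have h1 : 2 * m * α ≤ N := by
    have h := (le_div_iff₀ h2mQ).mp hfl1
    rw [hcast, hcast2] at h
    have hq : ((2 * m * α : ℤ) : ℚ) ≤ ((N : ℤ) : ℚ) := by push_cast at h ⊢; nlinarith
    exact_mod_cast hq
  have h2 : N < 2 * m * (α + 1) := by
    have h := (div_lt_iff₀ h2mQ).mp hfl2
    rw [hcast, hcast2] at h
    have hq : ((N : ℤ) : ℚ) < ((2 * m * (α + 1) : ℤ) : ℚ) := by push_cast at h ⊢; nlinarith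
    exact_mod_cast hq
  have hα0 : 0 ≤ α := by nlinarith
  have hrw : ∀ l : ℤ, brillNoetherRho p l ((k + ε) * l + δ) + ε * l * (l + 2)
      = δ - l * (N - m * (l + 1)) := by
    intro l
    simp only [brillNoetherRho, hm, hN]
    ring
  constructor
  · intro hA l hl
    rw [hrw]
    have hkey := key_quad m N α l hm1 h1 h2
    have : α * (N - m * (α + 1)) = α * (p - δ - ε - (k - 1 + 2 * ε) * (α + 1)) := by
      rw [hm, hN]
    linarith
  · intro hB
    have := hB α hα0
    rw [hrw] at this
    have heq : α * (N - m * (α + 1)) = α * (p - δ - ε - (k - 1 + 2 * ε) * (α + 1)) := by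
      rw [hm, hN]
    linarith
end

section
/- Let ε ∈ {0,1} and let p, δ, k be integers with k + ε ≥ 2 and 0 ≤ δ ≤ p − 2ε. Set α := ⌊(p − δ − ε)/(2(k − 1 + 2ε))⌋. Then for every integer l ≥ 0 one has ρ(p, l, (k + ε)l + δ) + ε·l·(l + 2) ≥ ρ(p, α, (k + ε)α + δ) + ε·α·(α + 2); that is, the function l ↦ ρ(p, l, (k + ε)l + δ) + ε·l·(l + 2) on nonnegative integers attains its minimum at l = α. -/
/-- For ε ∈ {0,1}, integers p, δ, k with k + ε ≥ 2 and 0 ≤ δ ≤ p − 2ε, and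
α := ⌊(p − δ − ε)/(2(k − 1 + 2ε))⌋, the function
l ↦ ρ(p, l, (k + ε)l + δ) + ε·l·(l + 2) on nonnegative integers attains its
minimum at l = α. -/
theorem boundB_min_at_alpha (ε p δ k α : ℤ)
    (hε : ε = 0 ∨ ε = 1) (hk : k + ε ≥ 2) (hδ0 : 0 ≤ δ) (hδ1 : δ ≤ p - 2 * ε)
    (hα : α = ⌊((p : ℚ) - δ - ε) / (2 * ((k : ℚ) - 1 + 2 * ε))⌋) :
    ∀ l : ℤ, 0 ≤ l →
      brillNoetherRho p l ((k + ε) * l + δ) + ε * l * (l + 2) ≥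
        brillNoetherRho p α ((k + ε) * α + δ) + ε * α * (α + 2) := by
  have hm : (1 : ℤ) ≤ k - 1 + 2 * ε := by omega
  set m : ℤ := k - 1 + 2 * ε with hmdef
  set N : ℤ := p - δ - ε with hNdef
  have hmQ : (0 : ℚ) < 2 * ((k : ℚ) - 1 + 2 * ε) := by
    have : (1 : ℚ) ≤ (m : ℚ) := by exact_mod_cast hm
    push_cast [hmdef] at this ⊢
    linarith
  have hcastN : ((p : ℚ) - δ - ε) = (N : ℚ) := by push_cast [hNdef]; ring
  -- floor bounds
  have h1 : (α : ℚ) ≤ ((p : ℚ) - δ - ε) / (2 * ((k : ℚ) - 1 + 2 * ε)) := by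
    rw [hα]; exact Int.floor_le _
  have h2 : ((p : ℚ) - δ - ε) / (2 * ((k : ℚ) - 1 + 2 * ε)) < (α : ℚ) + 1 := by
    rw [hα]; exact Int.lt_floor_add_one _
  have hlow : 2 * m * α ≤ N := by
    have := (le_div_iff₀ hmQ).mp h1
    rw [hcastN] at this
    have : ((2 * m * α : ℤ) : ℚ) ≤ ((N : ℤ) : ℚ) := by push_cast [hmdef]; push_cast at this; linarith
    exact_mod_cast this
  have hhigh : N < 2 * m * (α + 1) := by
    have := (div_lt_iff₀ hmQ).mp h2
    rw [hcastN] at this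
    have : ((N : ℤ) : ℚ) < ((2 * m * (α + 1) : ℤ) : ℚ) := by push_cast [hmdef]; push_cast at this; linarith
    exact_mod_cast this
  intro l _
  have key : 0 ≤ (α - l) * (N - m * (l + α + 1)) := by
    rcases lt_trichotomy l α with h | h | h
    · apply mul_nonneg (by omega)
      have : m * (l + α + 1) ≤ m * (2 * α) :=
        mul_le_mul_of_nonneg_left (by omega) (by omega)
      nlinarith
    · simp [h]
    · rw [show (α - l) * (N - m * (l + α + 1)) = (l - α) * (m * (l + α + 1) - N) by ring]
      apply mul_nonneg (by omega)
      have : m * (2 * (α + 1)) ≤ m * (l + α + 1) :=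
        mul_le_mul_of_nonneg_left (by omega) (by omega)
      nlinarith
  have expand :
      brillNoetherRho p l ((k + ε) * l + δ) + ε * l * (l + 2) -
        (brillNoetherRho p α ((k + ε) * α + δ) + ε * α * (α + 2)) =
      (α - l) * (N - m * (l + α + 1)) := by
    simp only [brillNoetherRho, hmdef, hNdef]; ring
  linarith [key, expand.ge, expand.le]
end

section
/- Let ε ∈ {0,1} and let p, δ, k be integers with k + ε ≥ 2 and 0 ≤ δ ≤ p − 2ε. Set α := ⌊(p − δ − ε)/(2(k − 1 + 2ε))⌋ and assume δ ≥ α·(p − δ − ε − (k − 1 + 2ε)(α + 1)). Then, as rational numbers, 2(p − 1) − (p − δ + k − 1 + ε)²/(2(k − 1 + 2ε)) ≥ −(k + 3 − 2ε)/2, and equality holds if and only if p = α(α + 1)(k − 1 + 2ε) + ε and δ = α(α − 1)(k − 1 + 2ε). -/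
set_option maxHeartbeats 1000000 in
/-- The bound q(R_{p,δ,k}) ≥ −(k + 3 − 2ε)/2 with its equality characterization
(Remark 4.4): for ε ∈ {0,1}, integers p, δ, k with k + ε ≥ 2 and 0 ≤ δ ≤ p − 2ε,
α := ⌊(p − δ − ε)/(2(k − 1 + 2ε))⌋, and assuming condition (eq:boundA)
δ ≥ α·(p − δ − ε − (k − 1 + 2ε)(α + 1)), one has
2(p − 1) − (p − δ + k − 1 + ε)²/(2(k − 1 + 2ε)) ≥ −(k + 3 − 2ε)/2, with equality
if and only if p = α(α + 1)(k − 1 + 2ε) + ε and δ = α(α − 1)(k − 1 + 2ε). -/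
theorem square_lower_bound (ε p δ k α : ℤ)
    (hε : ε = 0 ∨ ε = 1) (hk : k + ε ≥ 2) (hδ0 : 0 ≤ δ) (hδ1 : δ ≤ p - 2 * ε)
    (hα : α = ⌊((p : ℚ) - δ - ε) / (2 * ((k : ℚ) - 1 + 2 * ε))⌋)
    (hA : δ ≥ α * (p - δ - ε - (k - 1 + 2 * ε) * (α + 1))) :
    2 * ((p : ℚ) - 1) - (((p : ℚ) - δ + k - 1 + ε) ^ 2) / (2 * ((k : ℚ) - 1 + 2 * ε)) ≥
        -(((k : ℚ) + 3 - 2 * ε) / 2) ∧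
      (2 * ((p : ℚ) - 1) - (((p : ℚ) - δ + k - 1 + ε) ^ 2) / (2 * ((k : ℚ) - 1 + 2 * ε)) =
          -(((k : ℚ) + 3 - 2 * ε) / 2) ↔
        p = α * (α + 1) * (k - 1 + 2 * ε) + ε ∧ δ = α * (α - 1) * (k - 1 + 2 * ε)) := by
  have hm1 : 1 ≤ k - 1 + 2 * ε := by rcases hε with h | h <;> omega
  set m := k - 1 + 2 * ε with hm
  set n := p - δ - ε with hn
  have hn0 : 0 ≤ n := by rcases hε with h | h <;> omega
  clear_value m n
  have hmQ : (0:ℚ) < 2 * (m:ℚ) := by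
    have : (0:ℤ) < 2 * m := by omega
    exact_mod_cast this
  have hden : 2 * ((k : ℚ) - 1 + 2 * ε) = 2 * (m:ℚ) := by
    rw [hm]; push_cast; ring
  have hfrac : ((p : ℚ) - δ - ε) / (2 * ((k : ℚ) - 1 + 2 * ε)) = (n:ℚ) / (2 * (m:ℚ)) := by
    rw [hden, hn]; push_cast; ring
  rw [hfrac] at hα
  have h1 : (α:ℚ) ≤ (n:ℚ) / (2 * (m:ℚ)) := by rw [hα]; exact Int.floor_le _
  have h2 : (n:ℚ) / (2 * (m:ℚ)) < (α:ℚ) + 1 := by rw [hα]; exact Int.lt_floor_add_one _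
  have hL : α * (2 * m) ≤ n := by
    have := (le_div_iff₀ hmQ).mp h1
    exact_mod_cast this
  have hR : n < (α + 1) * (2 * m) := by
    have := (div_lt_iff₀ hmQ).mp h2
    have h3 : (n:ℚ) < ((α:ℚ) + 1) * (2 * (m:ℚ)) := this
    exact_mod_cast h3
  have hA' : α * (n - m * (α + 1)) ≤ δ := hA
  have hAm : 0 ≤ m * (δ - α * (n - m * (α + 1))) :=
    mul_nonneg (by omega) (by linarith)
  have hprod : 0 ≤ (n - α * (2 * m)) * ((α + 1) * (2 * m) - n) :=
    mul_nonneg (by linarith) (by linarith)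
  have hkey : n * (n - 2 * m) ≤ 4 * m * δ := by nlinarith [hprod, hAm]
  have main : 2 * ((p : ℚ) - 1) - (((p : ℚ) - δ + k - 1 + ε) ^ 2) / (2 * ((k : ℚ) - 1 + 2 * ε))
      - (-(((k : ℚ) + 3 - 2 * ε) / 2))
      = ((4 * m * δ - n * (n - 2 * m) : ℤ) : ℚ) / (2 * (m:ℚ)) := by
    rw [hden]
    have hm0 : (m:ℚ) ≠ 0 := by positivity
    field_simp
    push_cast [hn, hm]
    ring
  constructor
  · have h0 : (0:ℚ) ≤ ((4 * m * δ - n * (n - 2 * m) : ℤ) : ℚ) / (2 * (m:ℚ)) := by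
      apply div_nonneg _ (le_of_lt hmQ)
      exact_mod_cast sub_nonneg.mpr hkey
    linarith [main]
  · constructor
    · intro hE
      have hq : ((4 * m * δ - n * (n - 2 * m) : ℤ) : ℚ) / (2 * (m:ℚ)) = 0 := by
        rw [← main]; linarith
      have hN0 : 4 * m * δ - n * (n - 2 * m) = 0 := by
        have := (div_eq_zero_iff.mp hq).resolve_right (ne_of_gt hmQ)
        exact_mod_cast this
      have hN' : 4 * m * δ = n * (n - 2 * m) := by linarith
      -- t := n - m*(2α+1)
      have hsq : m ^ 2 ≤ (n - m * (2 * α + 1)) ^ 2 := by nlinarith [hAm, hN']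
      have ht1 : -m ≤ n - m * (2 * α + 1) := by nlinarith [hL]
      have hR' : n + 1 ≤ (α + 1) * (2 * m) := hR
      have ht2 : n - m * (2 * α + 1) ≤ m - 1 := by nlinarith [hR']
      have hpp : 0 ≤ (n - m * (2 * α + 1) + m) * (m - 1 - (n - m * (2 * α + 1))) :=
        mul_nonneg (by linarith) (by linarith)
      have ht3 : n - m * (2 * α + 1) ≤ -m := by nlinarith [hpp, hsq]
      have hnval : n = 2 * m * α := by linarith
      have h4 : 4 * m * δ = 4 * m * (m * α * (α - 1)) := by
        linear_combination hN' + (n + 2 * m * α - 2 * m) * hnval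
      have hδval : δ = m * α * (α - 1) :=
        mul_left_cancel₀ (show (4 * m : ℤ) ≠ 0 by omega) h4
      constructor
      · linear_combination hnval - hn + hδval
      · linear_combination hδval
    · rintro ⟨hp, hd⟩
      have hN0 : 4 * m * δ - n * (n - 2 * m) = 0 := by
        rw [hn, hp, hd]; ring
      have hq : ((4 * m * δ - n * (n - 2 * m) : ℤ) : ℚ) / (2 * (m:ℚ)) = 0 := by
        rw [hN0]; norm_num
      linarith [main.trans hq]
end

section
/- Let k ≥ 2 be an integer and set Q := 2k + 2. Let S and B be integers with 0 ≤ S < B and 2B ≤ Q + S, and let a := gcd(Q, B). Then, as rational numbers, (Q²·S − Q·B²)/a² ≥ −(k + 1)·(Q/a)²/2. -/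
/-- Arithmetic core of Proposition 3.7: for an integer k ≥ 2, Q := 2k + 2,
integers S, B with 0 ≤ S < B and 2B ≤ Q + S, and a := gcd(Q, B), one has
(Q²S − QB²)/a² ≥ −(k + 1)(Q/a)²/2 as rational numbers. -/
theorem wall_divisor_square_bound (k Q S B : ℤ) (a : ℤ)
    (hk : 2 ≤ k) (hQ : Q = 2 * k + 2)
    (hS0 : 0 ≤ S) (hSB : S < B) (hB : 2 * B ≤ Q + S)
    (ha : a = Int.gcd Q B) :
    ((Q : ℚ) ^ 2 * S - Q * B ^ 2) / (a : ℚ) ^ 2 ≥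
      -(((k : ℚ) + 1) * ((Q : ℚ) / (a : ℚ)) ^ 2 / 2) := by
  have hQpos : 0 < Q := by omega
  have hapos : 0 < a := by
    rw [ha]
    exact_mod_cast Int.gcd_pos_of_ne_zero_left B hQpos.ne'
  have haQ : (0 : ℚ) < (a : ℚ) := by exact_mod_cast hapos
  have haQ2 : (0 : ℚ) < (a : ℚ) ^ 2 := by positivity
  have hrw : -(((k : ℚ) + 1) * ((Q : ℚ) / (a : ℚ)) ^ 2 / 2)
      = (-(((k : ℚ) + 1) * (Q : ℚ) ^ 2 / 2)) / (a : ℚ) ^ 2 := by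
    field_simp
  have hkQ : (Q : ℚ) = 2 * (k : ℚ) + 2 := by exact_mod_cast hQ
  have hS0' : (0 : ℚ) ≤ (S : ℚ) := by exact_mod_cast hS0
  have hSB' : (S : ℚ) < (B : ℚ) := by exact_mod_cast hSB
  have hB' : 2 * (B : ℚ) ≤ (Q : ℚ) + (S : ℚ) := by exact_mod_cast hB
  have hQpos' : (0 : ℚ) < (Q : ℚ) := by exact_mod_cast hQpos
  have hSQ : (S : ℚ) < (Q : ℚ) := by linarith
  have key : -(((k : ℚ) + 1) * (Q : ℚ) ^ 2 / 2) ≤ (Q : ℚ) ^ 2 * S - Q * B ^ 2 := by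
    nlinarith [mul_nonneg (mul_nonneg hQpos'.le hS0') (by linarith : (0:ℚ) ≤ 2*(Q:ℚ) - S),
      mul_nonneg (mul_nonneg hQpos'.le (by linarith : (0:ℚ) ≤ (Q:ℚ)+S-2*B))
        (by nlinarith : (0:ℚ) ≤ (Q:ℚ)+S+2*B)]
  rw [ge_iff_le, hrw]
  gcongr
end

section
/- Let ε ∈ {0,1} and let p, δ, k be integers with k ≥ 2 and δ ≥ 0. Set χ := p − δ − k + 3 − 5ε and α := ⌊(p − δ − ε)/(2(k − 1 + 2ε))⌋, and assume χ ≥ 2δ + 2. Then δ ≥ α·(p − δ − ε − (k − 1 + 2ε)(α + 1)) holds if and only if χ ≤ δ + k + 1. -/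
/-- Floor of an integer cast divided by a positive integer cast equals integer division. -/
lemma floor_int_div (a b : ℤ) (hb : 0 < b) : ⌊((a : ℚ) / (b : ℚ))⌋ = a / b := by
  have hbn : ((b.toNat : ℤ)) = b := Int.toNat_of_nonneg hb.le
  have := Rat.floor_intCast_div_natCast a b.toNat
  rw [← hbn]
  exact_mod_cast this

/-- First step in the proof of Theorem 7.1: for ε ∈ {0,1}, integers p, δ, k with
k ≥ 2 and δ ≥ 0, χ := p − δ − k + 3 − 5ε and α := ⌊(p − δ − ε)/(2(k − 1 + 2ε))⌋,
if χ ≥ 2δ + 2, then condition (eq:boundA) δ ≥ α·(p − δ − ε − (k − 1 + 2ε)(α + 1))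
holds if and only if χ ≤ δ + k + 1. -/
theorem boundA_iff_chi_bound (ε p δ k χ α : ℤ)
    (hε : ε = 0 ∨ ε = 1) (hk : 2 ≤ k) (hδ0 : 0 ≤ δ)
    (hχ : χ = p - δ - k + 3 - 5 * ε)
    (hα : α = ⌊((p : ℚ) - δ - ε) / (2 * ((k : ℚ) - 1 + 2 * ε))⌋)
    (hχδ : χ ≥ 2 * δ + 2) :
    δ ≥ α * (p - δ - ε - (k - 1 + 2 * ε) * (α + 1)) ↔ χ ≤ δ + k + 1 := by
  have hm : (1 : ℤ) ≤ k - 1 + 2 * ε := by rcases hε with h | h <;> omega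
  set m : ℤ := k - 1 + 2 * ε with hmdef
  set N : ℤ := p - δ - ε with hNdef
  have h2m : (0 : ℤ) < 2 * m := by omega
  have hαN : α = N / (2 * m) := by
    rw [hα, ← floor_int_div N (2 * m) h2m]
    congr 1
    push_cast [hNdef, hmdef]
    ring
  have hdiv := Int.mul_ediv_add_emod N (2 * m)
  have hr0 := Int.emod_nonneg N (by omega : (2 * m) ≠ 0)
  have hrlt := Int.emod_lt_of_pos N h2m
  set r : ℤ := N % (2 * m) with hrdef
  have hNeq : N = 2 * m * α + r := by rw [hαN]; omega
  -- χ = N - m + 2 - 2ε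
  have hχN : χ = N - m + 2 - 2 * ε := by rw [hχ, hNdef, hmdef]; ring
  -- hypothesis: N ≥ 2δ + m + 2ε
  have hN1 : N ≥ 2 * δ + m + 2 * ε := by omega
  have hε0 : 0 ≤ ε := by rcases hε with h | h <;> omega
  constructor
  · intro h
    by_contra hc
    push_neg at hc
    -- hc : δ + k + 1 < χ, i.e. N ≥ δ + 2m + 1
    have hN2 : N ≥ δ + 2 * m + 1 := by omega
    -- α ≥ 1
    have hα1 : 1 ≤ α := by nlinarith [hNeq]
    -- product of consecutive integers is nonneg
    have hcons : 0 ≤ (α - 2) * (α - 1) := by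
      rcases le_or_gt α 1 with h' | h'
      · have : (α - 2) * (α - 1) = (2 - α) * (1 - α) := by ring
        rw [this]; exact mul_nonneg (by omega) (by omega)
      · exact mul_nonneg (by omega) (by omega)
    have hgoal : α * (N - m * (α + 1)) ≥ N - 2 * m := by
      nlinarith [mul_nonneg hr0 (by omega : (0:ℤ) ≤ α - 1)]
    have heq : α * (p - δ - ε - (k - 1 + 2 * ε) * (α + 1)) = α * (N - m * (α + 1)) := by
      rw [hNdef, hmdef]
    rw [heq] at h
    linarith
  · intro h
    -- N ≤ δ + 2m
    have hN2 : N ≤ δ + 2 * m := by omega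
    have hδm : δ ≤ m := by omega
    have hα0 : 0 ≤ α := by rw [hαN]; exact Int.ediv_nonneg (by omega) (by omega)
    have hα1 : α ≤ 1 := by
      by_contra h'
      push_neg at h'
      nlinarith [hNeq]
    have hgoal : α * (p - δ - ε - (k - 1 + 2 * ε) * (α + 1)) = α * (N - m * (α + 1)) := by
      rw [hNdef, hmdef]
    rw [ge_iff_le, hgoal]
    interval_cases α
    · simpa using hδ0
    · have : 1 * (N - m * (1 + 1)) = N - 2 * m := by ring
      rw [this]
      omega
end
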